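/- Assume Condition (*). Then every vertex v of G is incident to at most two red edges and at most two blue edges under c. Moreover, if v is incident to two red edges, then there is a drum of G containing both of these edges all four of whose edges are red; and likewise with blue in place of red. -/

import Mathlib

/-- A perfect matching of `G`: a set of edges of `G` such that every vertex
lies in exactly one edge of the set. -/
def IsPerfectMatching {V : Type*} (G : SimpleGraph V) (M : Set (Sym2 V)) : Prop :=
  M ⊆ G.edgeSet ∧ ∀ v : V, ∃! e : Sym2 V, e ∈ M ∧ v ∈ e

/-- `c` is a PMValid `k`-edge-colouring of `G`: it colours the edges of `G` with colours
in `{1, …, k}`, every perfect matching of `G` is monochromatic under `c`, and every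
colour class contains a perfect matching. -/
def PMValid {V : Type*} (G : SimpleGraph V) (c : Sym2 V → ℕ) (k : ℕ) : Prop :=
  (∀ e ∈ G.edgeSet, c e ∈ Finset.Icc 1 k) ∧
  (∀ M : Set (Sym2 V), IsPerfectMatching G M → ∀ e ∈ M, ∀ e' ∈ M, c e = c e') ∧
  (∀ i ∈ Finset.Icc 1 k, ∃ M : Set (Sym2 V), IsPerfectMatching G M ∧ ∀ e ∈ M, c e = i)

/-- `G` is matching covered: every edge lies in some perfect matching. -/
def MatchingCovered {V : Type*} (G : SimpleGraph V) : Prop :=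
  ∀ e ∈ G.edgeSet, ∃ M : Set (Sym2 V), IsPerfectMatching G M ∧ e ∈ M

/-- `e` is a C-edge: an edge of the distinguished Hamiltonian cycle `0, 1, …, 2n-1`
on `ZMod (2n)`, i.e. `e = {i, i+1}` for some `i`. -/
def IsCEdge (n : ℕ) (e : Sym2 (ZMod (2 * n))) : Prop :=
  ∃ i : ZMod (2 * n), e = s(i, i + 1)

/-- `e` is a legal edge: it joins two vertices of the same parity
(the parity of the residue is well defined since the modulus `2n` is even). -/
def IsLegal (n : ℕ) (e : Sym2 (ZMod (2 * n))) : Prop :=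
  ∃ a b : ZMod (2 * n), e = s(a, b) ∧ a.val % 2 = b.val % 2

/-- `k` lies on the arc strictly between `i` and `j` in clockwise (increasing) order,
i.e. `k ∈ {i+1, i+2, …, j-1}`. -/
def InArc (n : ℕ) (i j k : ZMod (2 * n)) : Prop :=
  0 < (k - i).val ∧ (k - i).val < (j - i).val

/-- Edges `e = {a, b}` and `e'` cross: `e'` has one endpoint in `P(e)` (the arc strictly
between `a` and `b`) and its other endpoint in `P'(e)` (the arc strictly between `b` and `a`). -/
def Crosses (n : ℕ) (e e' : Sym2 (ZMod (2 * n))) : Prop :=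
  ∃ a b x y : ZMod (2 * n), e = s(a, b) ∧ e' = s(x, y) ∧ InArc n a b x ∧ InArc n b a y

/-- `{e, e'}` is a drum: an unordered pair of crossing legal edges of the form
`{u, v}` and `{u+1, v+1}`. -/
def IsDrum (n : ℕ) (e e' : Sym2 (ZMod (2 * n))) : Prop :=
  IsLegal n e ∧ IsLegal n e' ∧ Crosses n e e' ∧
  ∃ u v : ZMod (2 * n),
    (e = s(u, v) ∧ e' = s(u + 1, v + 1)) ∨ (e' = s(u, v) ∧ e = s(u + 1, v + 1))

/-- Condition (*): `n ≥ 3`, `G` (on vertex set `ZMod (2n)`) contains every C-edge,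
`G` is matching covered, `c` is a PMValid 2-edge-colouring of `G` with colours
red (= 1) and blue (= 2), and the C-edges are coloured alternately:
the edge `{i, i+1}` is red when `i` is odd and blue when `i` is even. -/
def CondStar (n : ℕ) (G : SimpleGraph (ZMod (2 * n))) (c : Sym2 (ZMod (2 * n)) → ℕ) : Prop :=
  3 ≤ n ∧ (∀ i : ZMod (2 * n), G.Adj i (i + 1)) ∧ MatchingCovered G ∧ PMValid G c 2 ∧
  ∀ i : ZMod (2 * n), c (s(i, i + 1)) = if i.val % 2 = 1 then 1 else 2

/-!
Fix a colour class, say red, and call an edge that is not a C-edge a chord. Every chord is legal: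
a chord `{a, b}` between vertices of different parity extends, by matching both arcs along the
cycle, to a perfect matching containing the C-edges `{a + 1, a + 2}` and `{b + 1, b + 2}`, which
have different colours. Similarly, two crossing chords `{u, x}` and `{u + 1, y}` with `x + 1 ≠ y`
extend to a perfect matching that also contains `{x + 1, x + 2}`; when `{u, u + 1}` is red this
edge is blue, so neither chord is red.

The heart of the proof: in a red perfect matching, a chord `{a, b}` with `{a, a + 1}` red comes
with the chord `{a + 1, b + 1}`, and a chord `{p, q}` with `{p - 1, p}` red comes with
`{p - 1, q - 1}`. Both are proved together by strong induction on the length of the chord. The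
partner `x` of `a + 1` is joined to it by a chord; if `x` lies beyond `b + 1` we get a forbidden
crossing, and if `x` lies strictly between `a + 1` and `b` the induction hypothesis for the
shorter chord `{x, a + 1}` matches `a` with `x - 1 ≠ b`.

Since `G` is matching covered, every red chord at `v` therefore spans a red drum with the red
C-edge at `v`, and two red chords at `v` would produce a forbidden crossing. So `v` meets its red
C-edge and at most one red chord.
-/

section PerfectMatching

variable {V : Type*} {G : SimpleGraph V} {M : Set (Sym2 V)}

theorem isPerfectMatching_of_involutive (φ : V → V) (hφ : Function.Involutive φ)
    (hadj : ∀ v, G.Adj v (φ v)) : IsPerfectMatching G (Set.range fun v => s(v, φ v)) := by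
  refine ⟨?_, fun v => ⟨s(v, φ v), ⟨⟨v, rfl⟩, Sym2.mem_mk_left _ _⟩, ?_⟩⟩
  · rintro _ ⟨v, rfl⟩
    exact hadj v
  · rintro _ ⟨⟨w, rfl⟩, hv⟩
    rcases Sym2.mem_iff.1 hv with rfl | rfl
    · rfl
    · rw [hφ w, Sym2.eq_swap]

theorem IsPerfectMatching.exists_mk_mem (hM : IsPerfectMatching G M) (v : V) :
    ∃ w, s(v, w) ∈ M := by
  obtain ⟨e, ⟨he, hv⟩, -⟩ := hM.2 v
  exact ⟨Sym2.Mem.other hv, by rwa [Sym2.other_spec hv]⟩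

theorem IsPerfectMatching.adj_of_mk_mem (hM : IsPerfectMatching G M) {v w : V}
    (h : s(v, w) ∈ M) : G.Adj v w :=
  hM.1 h

theorem IsPerfectMatching.eq_of_mk_mem (hM : IsPerfectMatching G M) {v w w' : V}
    (h : s(v, w) ∈ M) (h' : s(v, w') ∈ M) : w = w' := by
  obtain ⟨e, -, huniq⟩ := hM.2 v
  exact Sym2.congr_right.1
    ((huniq _ ⟨h, Sym2.mem_mk_left _ _⟩).trans (huniq _ ⟨h', Sym2.mem_mk_left _ _⟩).symm)

theorem MatchingCovered.exists_isPerfectMatching_colour_eq (hcov : MatchingCovered G)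
    {c : Sym2 V → ℕ} (hmono : ∀ M, IsPerfectMatching G M → ∀ e ∈ M, ∀ e' ∈ M, c e = c e')
    {a b : V} (hab : G.Adj a b) :
    ∃ M, IsPerfectMatching G M ∧ s(a, b) ∈ M ∧ ∀ e ∈ M, c e = c s(a, b) := by
  obtain ⟨M, hM, hmem⟩ := hcov _ (G.mem_edgeSet.2 hab)
  exact ⟨M, hM, hmem, fun e he => hmono M hM e he _ hmem⟩

end PerfectMatching

/-- `InArc n i j k` unfolds to `0 < cwDist i k ∧ cwDist i k < cwDist i j`. -/
def cwDist {N : ℕ} (a b : ZMod N) : ℕ := (b - a).val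

section CwDist

variable {N : ℕ}

@[simp] theorem cwDist_self (a : ZMod N) : cwDist a a = 0 := by simp [cwDist]

theorem cwDist_eq_zero_iff {a b : ZMod N} : cwDist a b = 0 ↔ a = b := by
  rw [cwDist, ZMod.val_eq_zero, sub_eq_zero, eq_comm]

theorem cwDist_add_add_right (a b c : ZMod N) : cwDist (a + c) (b + c) = cwDist a b := by
  rw [cwDist, cwDist, add_sub_add_right_eq_sub]

theorem cwDist_add_natCast (a : ZMod N) {k : ℕ} (hk : k < N) : cwDist a (a + k) = k := by
  rw [cwDist, add_sub_cancel_left, ZMod.val_natCast, Nat.mod_eq_of_lt hk]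

theorem cwDist_add_one (a : ZMod N) (hN : 1 < N) : cwDist a (a + 1) = 1 := by
  simpa using cwDist_add_natCast a hN

variable [NeZero N]

theorem cwDist_lt (a b : ZMod N) : cwDist a b < N := ZMod.val_lt _

theorem add_cwDist (a b : ZMod N) : a + (cwDist a b : ZMod N) = b := by
  rw [cwDist, ZMod.natCast_zmod_val, add_sub_cancel]

theorem cwDist_injective (a : ZMod N) : Function.Injective (cwDist a) := fun b b' h => by
  rw [← add_cwDist a b, h, add_cwDist]

theorem cwDist_add_cwDist (a b c : ZMod N) :
    cwDist a b + cwDist b c = cwDist a c ∨ cwDist a b + cwDist b c = cwDist a c + N := by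
  have h : cwDist a c = (cwDist a b + cwDist b c) % N := by
    rw [cwDist, ← sub_add_sub_cancel c b a, add_comm, ZMod.val_add]; rfl
  have := cwDist_lt a b
  have := cwDist_lt b c
  rcases Nat.lt_or_ge (cwDist a b + cwDist b c) N with hlt | hge
  · exact Or.inl (by rw [h, Nat.mod_eq_of_lt hlt])
  · exact Or.inr (by rw [h, Nat.mod_eq_sub_mod hge, Nat.mod_eq_of_lt (by omega)]; omega)

theorem cwDist_add_one_right {a b : ZMod N} (h : cwDist a b + 1 < N) :
    cwDist a (b + 1) = cwDist a b + 1 := by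
  conv_lhs => rw [← add_cwDist a b, add_assoc, ← Nat.cast_add_one]
  exact cwDist_add_natCast a h

theorem cwDist_sub_one_left {a b : ZMod N} (h : cwDist a b + 1 < N) :
    cwDist (a - 1) b = cwDist a b + 1 := by
  rw [← cwDist_add_one_right h, ← cwDist_add_add_right (a - 1) b 1, sub_add_cancel]

theorem cwDist_add_cwDist_swap {a b : ZMod N} (hab : a ≠ b) : cwDist a b + cwDist b a = N := by
  have := cwDist_add_cwDist a b a
  have := cwDist_eq_zero_iff.not.2 hab
  simp only [cwDist_self] at *
  omega

end CwDist

section Cycle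

variable {n : ℕ} [NeZero n]

theorem one_lt_two_mul_of_neZero : 1 < 2 * n := by have := NeZero.pos n; omega

theorem val_add_natCast_mod_two (a : ZMod (2 * n)) (k : ℕ) :
    (a + k).val % 2 = (a.val + k) % 2 := by
  rw [ZMod.val_add, ZMod.val_natCast, Nat.mod_mod_of_dvd _ (dvd_mul_right 2 n),
    Nat.add_mod, Nat.mod_mod_of_dvd _ (dvd_mul_right 2 n), ← Nat.add_mod]

theorem val_add_one_mod_two (a : ZMod (2 * n)) : (a + 1).val % 2 = (a.val + 1) % 2 := by
  simpa using val_add_natCast_mod_two a 1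

theorem val_sub_one_mod_two (a : ZMod (2 * n)) : (a - 1).val % 2 = (a.val + 1) % 2 := by
  have := val_add_one_mod_two (a - 1)
  rw [sub_add_cancel] at this
  omega

theorem cwDist_mod_two (a b : ZMod (2 * n)) : cwDist a b % 2 = (a.val + b.val) % 2 := by
  have := val_add_natCast_mod_two a (cwDist a b)
  rw [add_cwDist] at this
  omega

theorem isCEdge_iff_cwDist {a b : ZMod (2 * n)} :
    IsCEdge n s(a, b) ↔ cwDist a b = 1 ∨ cwDist b a = 1 := by
  constructor
  · rintro ⟨i, hi⟩
    rcases Sym2.eq_iff.1 hi with ⟨rfl, rfl⟩ | ⟨rfl, rfl⟩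
    exacts [Or.inl (cwDist_add_one _ one_lt_two_mul_of_neZero),
      Or.inr (cwDist_add_one _ one_lt_two_mul_of_neZero)]
  · rintro (h | h)
    · exact ⟨a, by rw [← add_cwDist a b, h, Nat.cast_one]⟩
    · exact ⟨b, by rw [← add_cwDist b a, h, Nat.cast_one, Sym2.eq_swap]⟩

theorem two_le_cwDist_of_not_isCEdge {a b : ZMod (2 * n)} (hab : a ≠ b)
    (hnc : ¬IsCEdge n s(a, b)) : 2 ≤ cwDist a b ∧ 2 ≤ cwDist b a := by
  rw [isCEdge_iff_cwDist] at hnc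
  have := cwDist_eq_zero_iff.not.2 hab
  have := cwDist_eq_zero_iff.not.2 hab.symm
  omega

end Cycle

section Pairings

theorem exists_isPerfectMatching_of_pairing {N : ℕ} [NeZero N] {G : SimpleGraph (ZMod N)}
    (a : ZMod N) (ψ : ℕ → ℕ) (hψ : ∀ m < N, ψ m < N ∧ ψ (ψ m) = m)
    (hadj : ∀ m < N, G.Adj (a + m) (a + ψ m)) :
    ∃ M, IsPerfectMatching G M ∧ ∀ m < N, s(a + m, a + ψ m) ∈ M := by
  refine ⟨_, isPerfectMatching_of_involutive (fun v => a + ψ (cwDist a v)) (fun v => ?_)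
    (fun v => ?_), fun m hm => ⟨a + m, ?_⟩⟩
  · have h := hψ _ (cwDist_lt a v)
    simp only [cwDist_add_natCast a h.1, h.2, add_cwDist]
  · simpa only [add_cwDist] using hadj _ (cwDist_lt a v)
  · simp only [cwDist_add_natCast a hm]

theorem adj_natCast_of_succ {N : ℕ} {G : SimpleGraph (ZMod N)} (hC : ∀ i, G.Adj i (i + 1))
    (a : ZMod N) {m k : ℕ} (h : k = m + 1 ∨ m = k + 1) : G.Adj (a + m) (a + k) := by
  rcases h with rfl | rfl
  · simpa [add_assoc] using hC (a + m)
  · simpa [add_assoc] using (hC (a + k)).symm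

/-- Offsets `0` and `D` from a base vertex are matched, all other offsets along the cycle. -/
def chordPairing (D m : ℕ) : ℕ :=
  if m = 0 then D else if m = D then 0
  else if m < D then (if m % 2 = 1 then m + 1 else m - 1)
  else (if m % 2 = 0 then m + 1 else m - 1)

/-- Offsets `0, P` and `1, Q` from a base vertex are matched, all other offsets along the
cycle. -/
def crossingPairing (P Q m : ℕ) : ℕ :=
  if m = 0 then P else if m = 1 then Q else if m = P then 0 else if m = Q then 1
  else if m < P then (if m % 2 = 0 then m + 1 else m - 1)
  else if m < Q then (if m % 2 = 1 then m + 1 else m - 1)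
  else (if m % 2 = 0 then m + 1 else m - 1)

theorem chordPairing_involutive {N D m : ℕ} (hN : N % 2 = 0) (hD : D % 2 = 1) (hDN : D < N)
    (hm : m < N) : chordPairing D m < N ∧ chordPairing D (chordPairing D m) = m := by
  have : m = 0 ∨ m = D ∨ (0 < m ∧ m < D ∧ m % 2 = 0) ∨ (0 < m ∧ m < D ∧ m % 2 = 1) ∨
      (D < m ∧ m % 2 = 0) ∨ (D < m ∧ m % 2 = 1) := by omega
  rcases this with h | h | h | h | h | h <;>
  · generalize hk : chordPairing D m = k
    simp (disch := omega) only [chordPairing, if_pos, if_neg] at hk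
    subst hk
    simp (disch := omega) only [chordPairing, if_pos, if_neg, ↓reduceIte]
    omega

theorem crossingPairing_involutive {N P Q m : ℕ} (hN : N % 2 = 0) (hP : P % 2 = 0)
    (hQ : Q % 2 = 1) (hP2 : 2 ≤ P) (hPQ : P < Q) (hQN : Q < N) (hm : m < N) :
    crossingPairing P Q m < N ∧ crossingPairing P Q (crossingPairing P Q m) = m := by
  have : m = 0 ∨ m = 1 ∨ m = P ∨ m = Q ∨ (1 < m ∧ m < P ∧ m % 2 = 0) ∨
      (1 < m ∧ m < P ∧ m % 2 = 1) ∨ (P < m ∧ m < Q ∧ m % 2 = 0) ∨ (P < m ∧ m < Q ∧ m % 2 = 1) ∨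
      (Q < m ∧ m % 2 = 0) ∨ (Q < m ∧ m % 2 = 1) := by omega
  rcases this with h | h | h | h | h | h | h | h | h | h <;>
  · generalize hk : crossingPairing P Q m = k
    simp (disch := omega) only [crossingPairing, if_pos, if_neg] at hk
    subst hk
    simp (disch := omega) only [crossingPairing, if_pos, if_neg, ↓reduceIte]
    omega

variable {n : ℕ} [NeZero n] {G : SimpleGraph (ZMod (2 * n))}

theorem exists_isPerfectMatching_of_odd_chord (hC : ∀ i, G.Adj i (i + 1)) {a b : ZMod (2 * n)}
    (hab : G.Adj a b) (hodd : cwDist a b % 2 = 1) (h3 : 3 ≤ cwDist a b)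
    (h3' : cwDist a b + 3 ≤ 2 * n) :
    ∃ M, IsPerfectMatching G M ∧ s(a + 1, a + 1 + 1) ∈ M ∧ s(b + 1, b + 1 + 1) ∈ M := by
  rw [← add_cwDist a b] at hab ⊢
  set D := cwDist a b
  obtain ⟨M, hM, hmem⟩ := exists_isPerfectMatching_of_pairing (G := G) a (chordPairing D)
    (fun m hm => chordPairing_involutive (by omega) hodd (by omega) hm)
    (fun m hm => by
      unfold chordPairing
      split_ifs with h0 hD
      · subst h0; simpa using hab
      · subst hD; simpa using hab.symm
      all_goals exact adj_natCast_of_succ hC a (by omega))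
  refine ⟨M, hM, ?_, ?_⟩
  · have hψ : chordPairing D 1 = 2 := by
      simp (disch := omega) only [chordPairing, if_pos, if_neg, ↓reduceIte]
    convert hmem 1 (by omega) using 2 <;> (push_cast [hψ]; ring)
  · have hψ : chordPairing D (D + 1) = D + 2 := by
      simp (disch := omega) only [chordPairing, if_pos, if_neg]
    convert hmem (D + 1) (by omega) using 2 <;> (push_cast [hψ]; ring)

theorem exists_isPerfectMatching_of_crossing (hC : ∀ i, G.Adj i (i + 1)) {u x y : ZMod (2 * n)}
    (hux : G.Adj u x) (huy : G.Adj (u + 1) y) (hx : cwDist u x % 2 = 0) (hy : cwDist u y % 2 = 1)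
    (hx2 : 2 ≤ cwDist u x) (hxy : cwDist u x + 1 < cwDist u y) :
    ∃ M, IsPerfectMatching G M ∧ s(u, x) ∈ M ∧ s(u + 1, y) ∈ M ∧ s(x + 1, x + 1 + 1) ∈ M := by
  have hyN := cwDist_lt u y
  rw [← add_cwDist u x] at hux ⊢
  rw [← add_cwDist u y] at huy ⊢
  set P := cwDist u x
  set Q := cwDist u y
  obtain ⟨M, hM, hmem⟩ := exists_isPerfectMatching_of_pairing (G := G) u (crossingPairing P Q)
    (fun m hm => crossingPairing_involutive (by omega) hx hy hx2 (by omega) hyN hm)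
    (fun m hm => by
      unfold crossingPairing
      split_ifs with h0 h1 hP hQ
      · subst h0; simpa using hux
      · subst h1; simpa using huy
      · subst hP; simpa using hux.symm
      · subst hQ; simpa using huy.symm
      all_goals exact adj_natCast_of_succ hC u (by omega))
  refine ⟨M, hM, ?_, ?_, ?_⟩
  · simpa [crossingPairing] using hmem 0 (by omega)
  · have hψ : crossingPairing P Q 1 = Q := by simp [crossingPairing]
    simpa [hψ] using hmem 1 (by omega)
  · have hψ : crossingPairing P Q (P + 1) = P + 2 := by
      simp (disch := omega) only [crossingPairing, if_pos, if_neg]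
    convert hmem (P + 1) (by omega) using 2 <;> (push_cast [hψ]; ring)

end Pairings

section Colouring

variable {n : ℕ} [NeZero n]

theorem isCEdge_add_add_iff {a b : ZMod (2 * n)} (t : ZMod (2 * n)) :
    IsCEdge n s(a + t, b + t) ↔ IsCEdge n s(a, b) := by
  simp only [isCEdge_iff_cwDist, cwDist_add_add_right]

/-- Among the C-edges, colour `col` is carried exactly by the `{i, i + 1}` with `i` of parity `r`:
red is `r = 1, col = 1`, blue is `r = 0, col = 2`. -/
structure IsAlternatingColouring (G : SimpleGraph (ZMod (2 * n))) (c : Sym2 (ZMod (2 * n)) → ℕ)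
    (r col : ℕ) : Prop where
  adj_succ : ∀ i, G.Adj i (i + 1)
  monochromatic : ∀ M, IsPerfectMatching G M → ∀ e ∈ M, ∀ e' ∈ M, c e = c e'
  parity_lt : r < 2
  colour_succ : ∀ i, c s(i, i + 1) = col ↔ i.val % 2 = r

def cycleEdge (r : ℕ) (v : ZMod (2 * n)) : Sym2 (ZMod (2 * n)) :=
  if v.val % 2 = r then s(v, v + 1) else s(v - 1, v)

theorem cycleEdge_add_one {r : ℕ} {v : ZMod (2 * n)} (hv : v.val % 2 = r) :
    cycleEdge r (v + 1) = cycleEdge r v := by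
  have : (v + 1).val % 2 ≠ r := by rw [val_add_one_mod_two]; omega
  simp only [cycleEdge, if_neg this, if_pos hv, add_sub_cancel_right]

def drumEdges (u u' : ZMod (2 * n)) : Set (Sym2 (ZMod (2 * n))) :=
  {s(u, u'), s(u + 1, u' + 1), s(u, u + 1), s(u', u' + 1)}

namespace IsAlternatingColouring

variable {G : SimpleGraph (ZMod (2 * n))} {c : Sym2 (ZMod (2 * n)) → ℕ} {r col : ℕ}
  {M : Set (Sym2 (ZMod (2 * n)))}

theorem eq_cycleEdge (h : IsAlternatingColouring G c r col) {v : ZMod (2 * n)}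
    {e : Sym2 (ZMod (2 * n))} (hv : v ∈ e) (he : IsCEdge n e) (hc : c e = col) :
    e = cycleEdge r v := by
  obtain ⟨i, rfl⟩ := he
  have hi := (h.colour_succ i).1 hc
  rcases Sym2.mem_iff.1 hv with rfl | rfl
  · simp [cycleEdge, hi]
  · rw [cycleEdge_add_one hi]
    simp [cycleEdge, hi]

theorem eq_cycleEdge_or_chord (h : IsAlternatingColouring G c r col) {v : ZMod (2 * n)}
    {e : Sym2 (ZMod (2 * n))} (he : e ∈ G.incidenceSet v) (hc : c e = col) :
    e = cycleEdge r v ∨ ∃ w, G.Adj v w ∧ ¬IsCEdge n s(v, w) ∧ e = s(v, w) := by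
  by_cases hce : IsCEdge n e
  · exact Or.inl (h.eq_cycleEdge he.2 hce hc)
  · obtain ⟨w, rfl⟩ := Sym2.mem_iff_exists.1 he.2
    exact Or.inr ⟨w, (G.mem_incidenceSet v w).1 he, hce, rfl⟩

theorem parity_eq_of_chord (h : IsAlternatingColouring G c r col) {a b : ZMod (2 * n)}
    (hab : G.Adj a b) (hnc : ¬IsCEdge n s(a, b)) : a.val % 2 = b.val % 2 := by
  by_contra hpar
  have hD := two_le_cwDist_of_not_isCEdge hab.ne hnc
  have hsum := cwDist_add_cwDist_swap hab.ne
  have hodd := cwDist_mod_two a b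
  have := cwDist_mod_two b a
  obtain ⟨M, hM, ha, hb⟩ :=
    exists_isPerfectMatching_of_odd_chord h.adj_succ hab (by omega) (by omega) (by omega)
  have hcol := h.monochromatic M hM _ ha _ hb
  have ha1 := h.colour_succ (a + 1)
  have hb1 := h.colour_succ (b + 1)
  rw [val_add_one_mod_two, hcol] at ha1
  rw [val_add_one_mod_two] at hb1
  have := h.parity_lt
  omega

/-- A perfect matching through both chords also contains `{x + 1, x + 2}`, which is not of
colour `col`. -/
theorem colour_ne_of_crossing (h : IsAlternatingColouring G c r col) {u x y : ZMod (2 * n)}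
    (hu : u.val % 2 = r) (hx : x.val % 2 = r) (hy : y.val % 2 ≠ r) (hux : G.Adj u x)
    (huy : G.Adj (u + 1) y) (hxy : cwDist u x + 1 < cwDist u y) :
    c s(u, x) ≠ col ∧ c s(u + 1, y) ≠ col := by
  have hPx := cwDist_mod_two u x
  have hPy := cwDist_mod_two u y
  have hx0 := cwDist_eq_zero_iff.not.2 hux.ne
  obtain ⟨M, hM, hmx, hmy, hmx1⟩ :=
    exists_isPerfectMatching_of_crossing h.adj_succ hux huy (by omega) (by omega) (by omega) hxy
  have hx1 : c s(x + 1, x + 1 + 1) ≠ col := by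
    rw [Ne, h.colour_succ, val_add_one_mod_two]; have := h.parity_lt; omega
  rw [h.monochromatic M hM _ hmx _ hmx1, h.monochromatic M hM _ hmy _ hmx1]
  exact ⟨hx1, hx1⟩

section Matching

variable (h : IsAlternatingColouring G c r col) (hM : IsPerfectMatching G M)
  (hMc : ∀ e ∈ M, c e = col)
include h hM hMc

theorem not_isCEdge_of_cycleEdge_eq {v w v' w' : ZMod (2 * n)} (hvw : s(v, w) ∈ M)
    (hnc : ¬IsCEdge n s(v, w)) (hv' : cycleEdge r v' = cycleEdge r v) (hv'w' : s(v', w') ∈ M) :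
    ¬IsCEdge n s(v', w') := by
  intro hce
  have hmem : cycleEdge r v ∈ M := by
    rw [← hv', ← h.eq_cycleEdge (Sym2.mem_mk_left _ _) hce (hMc _ hv'w')]
    exact hv'w'
  unfold cycleEdge at hmem
  split_ifs at hmem
  · exact hnc (by rw [hM.eq_of_mk_mem hvw hmem]; exact ⟨v, rfl⟩)
  · rw [Sym2.eq_swap] at hmem
    exact hnc (by rw [hM.eq_of_mk_mem hvw hmem, Sym2.eq_swap]; exact ⟨v - 1, by rw [sub_add_cancel]⟩)

theorem add_one_mem_of_mem_of_sub_one_mem {a b : ZMod (2 * n)} (hab : s(a, b) ∈ M)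
    (hnc : ¬IsCEdge n s(a, b)) (ha : a.val % 2 = r)
    (ih : ∀ p q, cwDist q p < cwDist a b → s(p, q) ∈ M → ¬IsCEdge n s(p, q) → p.val % 2 ≠ r →
      s(p - 1, q - 1) ∈ M) :
    s(a + 1, b + 1) ∈ M := by
  have hadj := hM.adj_of_mk_mem hab
  have hb : b.val % 2 = r := (h.parity_eq_of_chord hadj hnc) ▸ ha
  obtain ⟨x, hx⟩ := hM.exists_mk_mem (a + 1)
  have hxnc := h.not_isCEdge_of_cycleEdge_eq hM hMc hab hnc (cycleEdge_add_one ha) hx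
  have hxr : x.val % 2 ≠ r := by
    have := h.parity_eq_of_chord (hM.adj_of_mk_mem hx) hxnc
    rw [val_add_one_mod_two] at this
    have := h.parity_lt
    omega
  have hP := two_le_cwDist_of_not_isCEdge hadj.ne hnc
  have hsum := cwDist_add_cwDist_swap hadj.ne
  have hX := cwDist_mod_two a x
  have hXlt := cwDist_lt a x
  have hb1 : cwDist a (b + 1) = cwDist a b + 1 := cwDist_add_one_right (by omega)
  suffices x = b + 1 by rwa [← this]
  rcases lt_trichotomy (cwDist a x) (cwDist a b + 1) with hlt | heq | hgt
  · -- `x` lies strictly inside the arc from `a + 1` to `b`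
    have hx1 : cwDist (a + 1) x + 1 = cwDist a x := by
      have := cwDist_add_cwDist a (a + 1) x
      rw [cwDist_add_one a one_lt_two_mul_of_neZero] at this
      have := cwDist_lt (a + 1) x
      omega
    have hmem := ih x (a + 1) (by omega) (by rwa [Sym2.eq_swap]) (by rwa [Sym2.eq_swap]) hxr
    rw [add_sub_cancel_right, Sym2.eq_swap] at hmem
    rw [hM.eq_of_mk_mem hab hmem, sub_add_cancel]
  · exact cwDist_injective a (by rw [heq, hb1])
  · exact absurd (hMc _ hab) (h.colour_ne_of_crossing ha hb hxr hadj (hM.adj_of_mk_mem hx) hgt).1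

theorem sub_one_mem_of_mem_of_add_one_mem {p q : ZMod (2 * n)} (hpq : s(p, q) ∈ M)
    (hnc : ¬IsCEdge n s(p, q)) (hp : p.val % 2 ≠ r)
    (ih : ∀ a b, cwDist a b < cwDist q p → s(a, b) ∈ M → ¬IsCEdge n s(a, b) → a.val % 2 = r →
      s(a + 1, b + 1) ∈ M) :
    s(p - 1, q - 1) ∈ M := by
  have hadj := hM.adj_of_mk_mem hpq
  have hr := h.parity_lt
  have hq : q.val % 2 ≠ r := (h.parity_eq_of_chord hadj hnc) ▸ hp
  have hp1 : (p - 1).val % 2 = r := by rw [val_sub_one_mod_two]; omega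
  obtain ⟨z, hz⟩ := hM.exists_mk_mem (p - 1)
  have hznc := h.not_isCEdge_of_cycleEdge_eq hM hMc hpq hnc
    (by rw [← cycleEdge_add_one hp1, sub_add_cancel]) hz
  have hzadj := hM.adj_of_mk_mem hz
  have hzr : z.val % 2 = r := (h.parity_eq_of_chord hzadj hznc) ▸ hp1
  have hQ := two_le_cwDist_of_not_isCEdge hadj.ne hnc
  have hsum := cwDist_add_cwDist_swap hadj.ne
  have hZ := two_le_cwDist_of_not_isCEdge hzadj.ne hznc
  have hZsum := cwDist_add_cwDist_swap hzadj.ne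
  have hZpar := cwDist_mod_two (p - 1) z
  have hQpar := cwDist_mod_two (p - 1) q
  have hq1 : cwDist (p - 1) q = cwDist p q + 1 := cwDist_sub_one_left (by omega)
  have hz1 : cwDist (p - 1) (z + 1) = cwDist (p - 1) z + 1 := cwDist_add_one_right (by omega)
  suffices z + 1 = q by rwa [← this, add_sub_cancel_right]
  rcases lt_trichotomy (cwDist (p - 1) z + 1) (cwDist (p - 1) q) with hlt | heq | hgt
  · have := (h.colour_ne_of_crossing hp1 hzr hq hzadj (by rwa [sub_add_cancel]) hlt).2
    rw [sub_add_cancel] at this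
    exact absurd (hMc _ hpq) this
  · exact cwDist_injective (p - 1) (by rw [hz1, heq])
  · -- `z` lies strictly inside the arc from `q` to `p - 1`
    have hmem := ih z (p - 1) (by omega) (by rwa [Sym2.eq_swap]) (by rwa [Sym2.eq_swap]) hzr
    rw [sub_add_cancel, Sym2.eq_swap] at hmem
    exact hM.eq_of_mk_mem hmem hpq

theorem add_one_mem_of_mem {a b : ZMod (2 * n)} (hab : s(a, b) ∈ M) (hnc : ¬IsCEdge n s(a, b))
    (ha : a.val % 2 = r) : s(a + 1, b + 1) ∈ M := by
  induction hk : cwDist a b using Nat.strong_induction_on generalizing a b with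
  | _ k ih =>
    subst hk
    exact h.add_one_mem_of_mem_of_sub_one_mem hM hMc hab hnc ha fun p q hlt hpq hpnc hp =>
      h.sub_one_mem_of_mem_of_add_one_mem hM hMc hpq hpnc hp fun a' b' hlt' hab' hnc' ha' =>
        ih _ (by omega) hab' hnc' ha' rfl

theorem sub_one_mem_of_mem {p q : ZMod (2 * n)} (hpq : s(p, q) ∈ M) (hnc : ¬IsCEdge n s(p, q))
    (hp : p.val % 2 ≠ r) : s(p - 1, q - 1) ∈ M :=
  h.sub_one_mem_of_mem_of_add_one_mem hM hMc hpq hnc hp fun _ _ _ hab hnc' ha =>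
    h.add_one_mem_of_mem hM hMc hab hnc' ha

end Matching

section MatchingCovered

variable (h : IsAlternatingColouring G c r col) (hcov : MatchingCovered G)
include h hcov

theorem adj_add_one_of_chord {a b : ZMod (2 * n)} (hab : G.Adj a b) (hnc : ¬IsCEdge n s(a, b))
    (hc : c s(a, b) = col) (ha : a.val % 2 = r) :
    G.Adj (a + 1) (b + 1) ∧ c s(a + 1, b + 1) = col := by
  obtain ⟨M, hM, hmem, hMc⟩ := hcov.exists_isPerfectMatching_colour_eq h.monochromatic hab
  rw [hc] at hMc
  have := h.add_one_mem_of_mem hM hMc hmem hnc ha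
  exact ⟨hM.adj_of_mk_mem this, hMc _ this⟩

theorem adj_sub_one_of_chord {p q : ZMod (2 * n)} (hpq : G.Adj p q) (hnc : ¬IsCEdge n s(p, q))
    (hc : c s(p, q) = col) (hp : p.val % 2 ≠ r) :
    G.Adj (p - 1) (q - 1) ∧ c s(p - 1, q - 1) = col := by
  obtain ⟨M, hM, hmem, hMc⟩ := hcov.exists_isPerfectMatching_colour_eq h.monochromatic hpq
  rw [hc] at hMc
  have := h.sub_one_mem_of_mem hM hMc hmem hnc hp
  exact ⟨hM.adj_of_mk_mem this, hMc _ this⟩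

theorem eq_of_chords {v w w' : ZMod (2 * n)} (hw : G.Adj v w) (hw' : G.Adj v w')
    (hnc : ¬IsCEdge n s(v, w)) (hnc' : ¬IsCEdge n s(v, w')) (hc : c s(v, w) = col)
    (hc' : c s(v, w') = col) : w = w' := by
  wlog hlt : cwDist v w < cwDist v w' generalizing w w'
  · rcases (not_lt.1 hlt).lt_or_eq with hgt | heq
    · exact (this hw' hw hnc' hnc hc' hc hgt).symm
    · exact cwDist_injective v heq.symm
  exfalso
  have hr := h.parity_lt
  have hpw := h.parity_eq_of_chord hw hnc
  have hpw' := h.parity_eq_of_chord hw' hnc'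
  have hD' := two_le_cwDist_of_not_isCEdge hw'.ne hnc'
  have hsum' := cwDist_add_cwDist_swap hw'.ne
  by_cases hv : v.val % 2 = r
  · have hadj := (h.adj_add_one_of_chord hcov hw' hnc' hc' hv).1
    have hw'1 : cwDist v (w' + 1) = cwDist v w' + 1 := cwDist_add_one_right (by omega)
    have hy : (w' + 1).val % 2 ≠ r := by rw [val_add_one_mod_two]; omega
    exact (h.colour_ne_of_crossing hv (by omega) hy hw hadj (by omega)).1 hc
  · have hadj := (h.adj_sub_one_of_chord hcov hw hnc hc hv).1
    have hv1 : (v - 1).val % 2 = r := by rw [val_sub_one_mod_two]; omega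
    have hw1 : (w - 1).val % 2 = r := by rw [val_sub_one_mod_two]; omega
    have hx : cwDist (v - 1) (w - 1) = cwDist v w := by
      have := cwDist_add_add_right (v - 1) (w - 1) 1
      rwa [sub_add_cancel, sub_add_cancel, eq_comm] at this
    have hy : cwDist (v - 1) w' = cwDist v w' + 1 := cwDist_sub_one_left (by omega)
    have := (h.colour_ne_of_crossing (y := w') hv1 hw1 (by omega) hadj (by rwa [sub_add_cancel])
      (by omega)).2
    rw [sub_add_cancel] at this
    exact this hc'

theorem isDrum_of_chord {u u' : ZMod (2 * n)} (hadj : G.Adj u u') (hnc : ¬IsCEdge n s(u, u'))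
    (hc : c s(u, u') = col) (hu : u.val % 2 = r) :
    s(u + 1, u' + 1) ∈ G.edgeSet ∧ IsDrum n s(u, u') s(u + 1, u' + 1) ∧
      ∀ f ∈ drumEdges u u', c f = col := by
  obtain ⟨hadj', hc'⟩ := h.adj_add_one_of_chord hcov hadj hnc hc hu
  have hpar := h.parity_eq_of_chord hadj hnc
  have hd := two_le_cwDist_of_not_isCEdge hadj.ne hnc
  have one := cwDist_add_one u one_lt_two_mul_of_neZero
  have one' := cwDist_add_one u' one_lt_two_mul_of_neZero
  refine ⟨hadj', ⟨⟨u, u', rfl, hpar⟩, ⟨u + 1, u' + 1, rfl, ?_⟩, ?_, u, u', Or.inl ⟨rfl, rfl⟩⟩, ?_⟩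
  · rw [val_add_one_mod_two, val_add_one_mod_two, Nat.add_mod, hpar, ← Nat.add_mod]
  · refine ⟨u, u', u + 1, u' + 1, rfl, rfl, ?_, ?_⟩
    · show 0 < cwDist u (u + 1) ∧ cwDist u (u + 1) < cwDist u u'
      omega
    · show 0 < cwDist u' (u' + 1) ∧ cwDist u' (u' + 1) < cwDist u' u
      omega
  · simp only [drumEdges, Set.mem_insert_iff, Set.mem_singleton_iff]
    rintro f (rfl | rfl | rfl | rfl)
    exacts [hc, hc', (h.colour_succ u).2 hu, (h.colour_succ u').2 (hpar ▸ hu)]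

theorem exists_drum_of_chord {v w : ZMod (2 * n)} (hvw : G.Adj v w) (hnc : ¬IsCEdge n s(v, w))
    (hc : c s(v, w) = col) :
    ∃ u u', s(u, u') ∈ G.edgeSet ∧ s(u + 1, u' + 1) ∈ G.edgeSet ∧
      IsDrum n s(u, u') s(u + 1, u' + 1) ∧ s(v, w) ∈ drumEdges u u' ∧
      cycleEdge r v ∈ drumEdges u u' ∧ ∀ f ∈ drumEdges u u', c f = col := by
  by_cases hv : v.val % 2 = r
  · obtain ⟨hadj', hdrum, hcol⟩ := h.isDrum_of_chord hcov hvw hnc hc hv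
    refine ⟨v, w, hvw, hadj', hdrum, by simp [drumEdges], ?_, hcol⟩
    simp [drumEdges, cycleEdge, hv]
  · obtain ⟨hadj, hc'⟩ := h.adj_sub_one_of_chord hcov hvw hnc hc hv
    have hnc' : ¬IsCEdge n s(v - 1, w - 1) := by
      rwa [← isCEdge_add_add_iff 1, sub_add_cancel, sub_add_cancel]
    have hv1 : (v - 1).val % 2 = r := by
      rw [val_sub_one_mod_two]; have := h.parity_lt; omega
    obtain ⟨hadj', hdrum, hcol⟩ := h.isDrum_of_chord hcov hadj hnc' hc' hv1
    refine ⟨v - 1, w - 1, hadj, hadj', hdrum, ?_, ?_, hcol⟩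
    · simp [drumEdges]
    · simp [drumEdges, cycleEdge, hv]

theorem ncard_incidenceSet_le_two (v : ZMod (2 * n)) :
    {e ∈ G.incidenceSet v | c e = col}.ncard ≤ 2 := by
  set S := {e ∈ G.incidenceSet v | c e = col}
  have hsub : S ⊆ insert (cycleEdge r v) {e ∈ S | ¬IsCEdge n e} := by
    intro e he
    by_cases hce : IsCEdge n e
    · exact Or.inl (h.eq_cycleEdge he.1.2 hce he.2)
    · exact Or.inr ⟨he, hce⟩
  have hchords : {e ∈ S | ¬IsCEdge n e}.ncard ≤ 1 := by
    refine (Set.ncard_le_one).2 fun e ⟨⟨he, hc⟩, hnc⟩ e' ⟨⟨he', hc'⟩, hnc'⟩ => ?_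
    obtain ⟨w, rfl⟩ := Sym2.mem_iff_exists.1 he.2
    obtain ⟨w', rfl⟩ := Sym2.mem_iff_exists.1 he'.2
    rw [h.eq_of_chords hcov ((G.mem_incidenceSet v w).1 he) ((G.mem_incidenceSet v w').1 he')
      hnc hnc' hc hc']
  calc S.ncard ≤ (insert (cycleEdge r v) {e ∈ S | ¬IsCEdge n e}).ncard := Set.ncard_le_ncard hsub
    _ ≤ {e ∈ S | ¬IsCEdge n e}.ncard + 1 := Set.ncard_insert_le _ _
    _ ≤ 2 := by omega

theorem exists_drum {v : ZMod (2 * n)} {e₁ e₂ : Sym2 (ZMod (2 * n))}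
    (h₁ : e₁ ∈ G.incidenceSet v) (h₂ : e₂ ∈ G.incidenceSet v) (hne : e₁ ≠ e₂)
    (hc₁ : c e₁ = col) (hc₂ : c e₂ = col) :
    ∃ u u', s(u, u') ∈ G.edgeSet ∧ s(u + 1, u' + 1) ∈ G.edgeSet ∧
      IsDrum n s(u, u') s(u + 1, u' + 1) ∧ e₁ ∈ drumEdges u u' ∧ e₂ ∈ drumEdges u u' ∧
      ∀ f ∈ drumEdges u u', c f = col := by
  obtain ⟨w, hw, hnc, hc, he₁, he₂⟩ : ∃ w, G.Adj v w ∧ ¬IsCEdge n s(v, w) ∧ c s(v, w) = col ∧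
      (e₁ = s(v, w) ∨ e₁ = cycleEdge r v) ∧ (e₂ = s(v, w) ∨ e₂ = cycleEdge r v) := by
    rcases h.eq_cycleEdge_or_chord h₁ hc₁ with rfl | ⟨w₁, hw₁, hnc₁, rfl⟩ <;>
      rcases h.eq_cycleEdge_or_chord h₂ hc₂ with rfl | ⟨w₂, hw₂, hnc₂, rfl⟩
    · exact absurd rfl hne
    · exact ⟨w₂, hw₂, hnc₂, hc₂, Or.inr rfl, Or.inl rfl⟩
    · exact ⟨w₁, hw₁, hnc₁, hc₁, Or.inl rfl, Or.inr rfl⟩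
    · exact absurd (by rw [h.eq_of_chords hcov hw₁ hw₂ hnc₁ hnc₂ hc₁ hc₂]) hne
  obtain ⟨u, u', hadj, hadj', hdrum, hvw, hcyc, hcol⟩ := h.exists_drum_of_chord hcov hw hnc hc
  refine ⟨u, u', hadj, hadj', hdrum, ?_, ?_, hcol⟩
  · rcases he₁ with rfl | rfl <;> assumption
  · rcases he₂ with rfl | rfl <;> assumption

end MatchingCovered

end IsAlternatingColouring

end Colouring

theorem statement_7 (n : ℕ) (G : SimpleGraph (ZMod (2 * n)))
    (c : Sym2 (ZMod (2 * n)) → ℕ) (h : CondStar n G c) (v : ZMod (2 * n)) :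
    {e ∈ G.incidenceSet v | c e = 1}.ncard ≤ 2 ∧
    {e ∈ G.incidenceSet v | c e = 2}.ncard ≤ 2 ∧
    ∀ col ∈ ({1, 2} : Set ℕ), ∀ e₁ e₂ : Sym2 (ZMod (2 * n)),
      e₁ ∈ G.incidenceSet v → e₂ ∈ G.incidenceSet v → e₁ ≠ e₂ →
      c e₁ = col → c e₂ = col →
      ∃ u u' : ZMod (2 * n), s(u, u') ∈ G.edgeSet ∧ s(u + 1, u' + 1) ∈ G.edgeSet ∧
        IsDrum n (s(u, u')) (s(u + 1, u' + 1)) ∧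
        e₁ ∈ ({s(u, u'), s(u + 1, u' + 1), s(u, u + 1), s(u', u' + 1)} :
          Set (Sym2 (ZMod (2 * n)))) ∧
        e₂ ∈ ({s(u, u'), s(u + 1, u' + 1), s(u, u + 1), s(u', u' + 1)} :
          Set (Sym2 (ZMod (2 * n)))) ∧
        ∀ f ∈ ({s(u, u'), s(u + 1, u' + 1), s(u, u + 1), s(u', u' + 1)} :
          Set (Sym2 (ZMod (2 * n)))), c f = col := by
  obtain ⟨hn, hC, hcov, hvalid, hcolour⟩ := h
  have : NeZero n := ⟨by omega⟩
  have red : IsAlternatingColouring G c 1 1 :=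
    ⟨hC, hvalid.2.1, by norm_num, fun i => by rw [hcolour]; split_ifs <;> omega⟩
  have blue : IsAlternatingColouring G c 0 2 :=
    ⟨hC, hvalid.2.1, by norm_num, fun i => by rw [hcolour]; split_ifs <;> omega⟩
  refine ⟨red.ncard_incidenceSet_le_two hcov v, blue.ncard_incidenceSet_le_two hcov v, ?_⟩
  rintro col (rfl | rfl) e₁ e₂ h₁ h₂ hne hc₁ hc₂
  exacts [red.exists_drum hcov h₁ h₂ hne hc₁ hc₂, blue.exists_drum hcov h₁ h₂ hne hc₁ hc₂]
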